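/- Let d ≥ 1, 0 < α ≤ β, and let U ⊆ ℝ^d be open. Let (A_n) be a sequence in M(α,β;U) and let A : U → ℝ^{d×d} be measurable and essentially bounded such that A_n converges to A in the weak-* sense, i.e. for every pair of indices i,j and every g ∈ L¹(U), ∫_U (A_n(x))_{ij} g(x) dx → ∫_U (A(x))_{ij} g(x) dx. Then A ∈ M(α,β;U); in other words, both defining inequalities of M(α,β;U) are preserved under weak-* limits. -/

import Mathlib

/-!
For fixed directions `ξ, η`, both defining inequalities of `M(α,β;U)` say that an affine
functional of the matrix field is a.e. nonnegative: the first one directly, the second one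
through the dual form `(1/β)|v|² = sup_η (v·η - (β/4)|η|²)`. A.e. nonnegativity of an
`L^∞` function is detected by integrating it against indicators of finite-measure sets, so it
passes to weak-* limits. Restricting `ξ, η` to a countable dense set makes the exceptional
null set independent of the directions, and continuity in `ξ, η` gives all directions.
-/

open MeasureTheory Filter Topology

noncomputable section

/-- The class `M(α,β;U)` of admissible matrix-valued coefficients: measurable,
essentially bounded matrix fields satisfying `A(x)ξ·ξ ≥ α|ξ|²` and
`A(x)ξ·ξ ≥ (1/β)|A(x)ξ|²` for all `ξ` and a.e. `x ∈ U`. -/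
def MemM (d : ℕ) (α β : ℝ) (U : Set (EuclideanSpace ℝ (Fin d)))
    (A : EuclideanSpace ℝ (Fin d) → Matrix (Fin d) (Fin d) ℝ) : Prop :=
  (∀ i j, Measurable fun x => A x i j) ∧
  (∃ M : ℝ, ∀ᵐ x ∂(volume.restrict U), ∀ i j, |A x i j| ≤ M) ∧
  (∀ᵐ x ∂(volume.restrict U), ∀ ξ : Fin d → ℝ,
    α * ∑ i, ξ i ^ 2 ≤ dotProduct ((A x).mulVec ξ) ξ ∧
    (1 / β) * ∑ i, ((A x).mulVec ξ i) ^ 2 ≤ dotProduct ((A x).mulVec ξ) ξ)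

open Matrix
open scoped ENNReal

section Pointwise

variable {ι : Type*} [Fintype ι] {β : ℝ}

theorem one_div_mul_sum_sq_le_iff (hβ : 0 < β) (v : ι → ℝ) (s : ℝ) :
    1 / β * ∑ i, v i ^ 2 ≤ s ↔ ∀ η : ι → ℝ, v ⬝ᵥ η ≤ s + β / 4 * ∑ i, η i ^ 2 := by
  constructor
  · intro h η
    have hterm : ∀ i, v i * η i ≤ 1 / β * v i ^ 2 + β / 4 * η i ^ 2 := fun i => by
      have := sq_nonneg (v i - β / 2 * η i)
      field_simp
      nlinarith
    calc v ⬝ᵥ η = ∑ i, v i * η i := rfl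
      _ ≤ ∑ i, (1 / β * v i ^ 2 + β / 4 * η i ^ 2) := Finset.sum_le_sum fun i _ => hterm i
      _ ≤ s + β / 4 * ∑ i, η i ^ 2 := by
        rw [Finset.sum_add_distrib, ← Finset.mul_sum, ← Finset.mul_sum]
        linarith
  · intro h
    -- the supremum over `η` is attained at `η = (2/β) v`
    have h2 := h ((2 / β) • v)
    simp only [dotProduct_smul, Pi.smul_apply, smul_eq_mul, mul_pow, ← Finset.mul_sum] at h2
    have hv : v ⬝ᵥ v = ∑ i, v i ^ 2 := by simp [dotProduct, sq]
    rw [hv] at h2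
    have hquad : β / 4 * ((2 / β) ^ 2 * ∑ i, v i ^ 2) =
        2 / β * ∑ i, v i ^ 2 - 1 / β * ∑ i, v i ^ 2 := by
      field_simp
      ring
    linarith

theorem ellipticity_of_denseRange {κ : Type*} {α : ℝ} (hβ : 0 < β)
    {e : κ → ι → ℝ} (he : DenseRange e) (B : Matrix ι ι ℝ)
    (h₁ : ∀ m, α * ∑ i, e m i ^ 2 ≤ B *ᵥ e m ⬝ᵥ e m)
    (h₂ : ∀ m n, B *ᵥ e m ⬝ᵥ e n ≤ B *ᵥ e m ⬝ᵥ e m + β / 4 * ∑ i, e n i ^ 2) (ξ : ι → ℝ) :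
    α * ∑ i, ξ i ^ 2 ≤ B *ᵥ ξ ⬝ᵥ ξ ∧ 1 / β * ∑ i, (B *ᵥ ξ) i ^ 2 ≤ B *ᵥ ξ ⬝ᵥ ξ := by
  refine ⟨he.induction_on ξ (isClosed_le (by fun_prop) (by fun_prop)) h₁, ?_⟩
  rw [one_div_mul_sum_sq_le_iff hβ]
  exact fun η => he.induction_on₂
    (p := fun ξ η => B *ᵥ ξ ⬝ᵥ η ≤ B *ᵥ ξ ⬝ᵥ ξ + β / 4 * ∑ i, η i ^ 2)
    (isClosed_le (by fun_prop) (by fun_prop)) h₂ ξ η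

end Pointwise

section WeakStar

variable {X : Type*} [MeasurableSpace X] {μ : Measure X} {ι : Type*}

theorem ae_nonneg_of_tendsto_integral_mul [SigmaFinite μ] {F : ℕ → X → ℝ} {f : X → ℝ}
    (hf : MemLp f ∞ μ) (hF : ∀ n, 0 ≤ᵐ[μ] F n)
    (hconv : ∀ g, Integrable g μ →
      Tendsto (fun n => ∫ x, F n x * g x ∂μ) atTop (𝓝 (∫ x, f x * g x ∂μ))) :
    0 ≤ᵐ[μ] f := by
  refine ae_nonneg_of_forall_setIntegral_nonneg_of_sigmaFinite (fun s _ hs => ?_) fun s hs hμs => ?_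
  · have : IsFiniteMeasure (μ.restrict s) := ⟨by rwa [Measure.restrict_apply_univ]⟩
    exact (hf.restrict s).integrable le_top
  · have hlim := hconv (s.indicator fun _ => 1)
      ((integrable_indicator_iff hs).2 (integrableOn_const (C := (1 : ℝ)) hμs.ne))
    simp only [← Set.indicator_mul_right, mul_one, integral_indicator hs] at hlim
    exact ge_of_tendsto' hlim fun n => setIntegral_nonneg_of_ae_restrict (ae_restrict_of_ae (hF n))

theorem memLp_top_entry_of_ae_abs_le {B : X → Matrix ι ι ℝ}
    (hm : ∀ i j, Measurable fun x => B x i j)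
    (hb : ∃ M : ℝ, ∀ᵐ x ∂μ, ∀ i j, |B x i j| ≤ M) (i j : ι) :
    MemLp (fun x => B x i j) ∞ μ :=
  let ⟨M, hM⟩ := hb
  memLp_top_of_bound (hm i j).aestronglyMeasurable M (hM.mono fun _ hx => hx i j)

theorem memLp_top_mulVec_dotProduct [Fintype ι] {B : X → Matrix ι ι ℝ}
    (hB : ∀ i j, MemLp (fun x => B x i j) ∞ μ) (ξ ζ : ι → ℝ) :
    MemLp (fun x => B x *ᵥ ξ ⬝ᵥ ζ) ∞ μ := by
  simp only [dotProduct, mulVec]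
  exact memLp_finsetSum _ fun i _ =>
    (memLp_finsetSum _ fun j _ => (hB i j).mul_const (ξ j)).mul_const (ζ i)

theorem integral_mulVec_dotProduct_add_mul [Fintype ι] {B : X → Matrix ι ι ℝ} {g : X → ℝ}
    (hg : Integrable g μ) (hB : ∀ i j, MemLp (fun x => B x i j) ∞ μ) (ξ ζ : ι → ℝ) (c : ℝ) :
    ∫ x, (B x *ᵥ ξ ⬝ᵥ ζ + c) * g x ∂μ =
      Matrix.of (fun i j => ∫ x, B x i j * g x ∂μ) *ᵥ ξ ⬝ᵥ ζ + c * ∫ x, g x ∂μ := by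
  have hBg : ∀ i j, Integrable (fun x => B x i j * g x) μ := fun i j =>
    hg.mul_of_top_right (hB i j)
  have hexpand : ∀ x, (B x *ᵥ ξ ⬝ᵥ ζ + c) * g x =
      ∑ i, (∑ j, B x i j * g x * ξ j) * ζ i + c * g x := fun x => by
    simp only [dotProduct, mulVec, add_mul, Finset.sum_mul]
    congr 1
    refine Finset.sum_congr rfl fun i _ => Finset.sum_congr rfl fun j _ => by ring
  simp only [hexpand]
  rw [integral_add (integrable_finsetSum _ fun i _ => (integrable_finsetSum _ fun j _ =>
      (hBg i j).mul_const _).mul_const _) (hg.const_mul c), integral_const_mul,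
    integral_finsetSum _ fun i _ => (integrable_finsetSum _ fun j _ =>
      (hBg i j).mul_const _).mul_const _]
  simp only [dotProduct, mulVec, of_apply]
  congr 1
  refine Finset.sum_congr rfl fun i _ => ?_
  rw [integral_mul_const, integral_finsetSum _ fun j _ => (hBg i j).mul_const _]
  simp only [integral_mul_const]

theorem ae_nonneg_mulVec_dotProduct_add_of_tendsto [SigmaFinite μ] [Fintype ι]
    {B : ℕ → X → Matrix ι ι ℝ} {C : X → Matrix ι ι ℝ}
    (hB : ∀ n i j, MemLp (fun x => B n x i j) ∞ μ) (hC : ∀ i j, MemLp (fun x => C x i j) ∞ μ)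
    (hconv : ∀ i j g, Integrable g μ →
      Tendsto (fun n => ∫ x, B n x i j * g x ∂μ) atTop (𝓝 (∫ x, C x i j * g x ∂μ)))
    (ξ ζ : ι → ℝ) (c : ℝ) (hBn : ∀ n, ∀ᵐ x ∂μ, 0 ≤ B n x *ᵥ ξ ⬝ᵥ ζ + c) :
    ∀ᵐ x ∂μ, 0 ≤ C x *ᵥ ξ ⬝ᵥ ζ + c := by
  refine ae_nonneg_of_tendsto_integral_mul
    ((memLp_top_mulVec_dotProduct hC ξ ζ).add (memLp_top_const c)) hBn fun g hg => ?_
  simp only [integral_mulVec_dotProduct_add_mul hg (hB _),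
    integral_mulVec_dotProduct_add_mul hg hC]
  have hcont : Continuous fun M : Matrix ι ι ℝ => M *ᵥ ξ ⬝ᵥ ζ + c * ∫ x, g x ∂μ := by fun_prop
  exact hcont.continuousAt.tendsto.comp
    (tendsto_pi_nhds.2 fun i => tendsto_pi_nhds.2 fun j => hconv i j g hg)

end WeakStar

theorem stmt14_general (d : ℕ) (α β : ℝ) (hα : 0 < α) (hαβ : α ≤ β)
    (U : Set (EuclideanSpace ℝ (Fin d)))
    (A : ℕ → EuclideanSpace ℝ (Fin d) → Matrix (Fin d) (Fin d) ℝ)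
    (hA : ∀ n, MemM d α β U (A n))
    (Alim : EuclideanSpace ℝ (Fin d) → Matrix (Fin d) (Fin d) ℝ)
    (hAlm : ∀ i j, Measurable fun x => Alim x i j)
    (hAlb : ∃ M : ℝ, ∀ᵐ x ∂(volume.restrict U), ∀ i j, |Alim x i j| ≤ M)
    (hconv : ∀ i j, ∀ g : EuclideanSpace ℝ (Fin d) → ℝ,
      Integrable g (volume.restrict U) →
      Tendsto (fun n => ∫ x in U, A n x i j * g x) atTop
        (𝓝 (∫ x in U, Alim x i j * g x))) :
    MemM d α β U Alim := by
  have hβ : 0 < β := hα.trans_le hαβ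
  have hlim := ae_nonneg_mulVec_dotProduct_add_of_tendsto
    (fun n => memLp_top_entry_of_ae_abs_le (hA n).1 (hA n).2.1)
    (memLp_top_entry_of_ae_abs_le hAlm hAlb) hconv
  have h₁ : ∀ ξ, ∀ᵐ x ∂(volume.restrict U), α * ∑ i, ξ i ^ 2 ≤ Alim x *ᵥ ξ ⬝ᵥ ξ := fun ξ => by
    refine (hlim ξ ξ (-(α * ∑ i, ξ i ^ 2)) fun n => ?_).mono fun x hx => by linarith
    filter_upwards [(hA n).2.2] with x hx
    linarith [(hx ξ).1]
  have h₂ : ∀ ξ η, ∀ᵐ x ∂(volume.restrict U),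
      Alim x *ᵥ ξ ⬝ᵥ η ≤ Alim x *ᵥ ξ ⬝ᵥ ξ + β / 4 * ∑ i, η i ^ 2 := fun ξ η => by
    refine (hlim ξ (ξ - η) (β / 4 * ∑ i, η i ^ 2) fun n => ?_).mono fun x hx => by
      rw [dotProduct_sub] at hx
      linarith
    filter_upwards [(hA n).2.2] with x hx
    have := (one_div_mul_sum_sq_le_iff hβ _ _).1 (hx ξ).2 η
    rw [dotProduct_sub]
    linarith
  set e := TopologicalSpace.denseSeq (Fin d → ℝ)
  have hae : ∀ᵐ x ∂(volume.restrict U), ∀ m n, α * ∑ i, e m i ^ 2 ≤ Alim x *ᵥ e m ⬝ᵥ e m ∧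
      Alim x *ᵥ e m ⬝ᵥ e n ≤ Alim x *ᵥ e m ⬝ᵥ e m + β / 4 * ∑ i, e n i ^ 2 :=
    ae_all_iff.2 fun m => ae_all_iff.2 fun n => (h₁ (e m)).and (h₂ (e m) (e n))
  refine ⟨hAlm, hAlb, hae.mono fun x hx => ?_⟩
  exact ellipticity_of_denseRange hβ (TopologicalSpace.denseRange_denseSeq _) (Alim x)
    (fun m => (hx m m).1) (fun m n => (hx m n).2)

/-- The class `M(α,β;U)` is closed under weak-* limits: if `A_n ∈ M(α,β;U)` converge
weak-* (entrywise, against all `L¹(U)` functions) to a measurable essentially bounded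
`A`, then `A ∈ M(α,β;U)`. -/
theorem stmt14 (d : ℕ) (hd : 1 ≤ d) (α β : ℝ) (hα : 0 < α) (hαβ : α ≤ β)
    (U : Set (EuclideanSpace ℝ (Fin d))) (hU : IsOpen U)
    (A : ℕ → EuclideanSpace ℝ (Fin d) → Matrix (Fin d) (Fin d) ℝ)
    (hA : ∀ n, MemM d α β U (A n))
    (Alim : EuclideanSpace ℝ (Fin d) → Matrix (Fin d) (Fin d) ℝ)
    (hAlm : ∀ i j, Measurable fun x => Alim x i j)
    (hAlb : ∃ M : ℝ, ∀ᵐ x ∂(volume.restrict U), ∀ i j, |Alim x i j| ≤ M)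
    (hconv : ∀ i j, ∀ g : EuclideanSpace ℝ (Fin d) → ℝ,
      Integrable g (volume.restrict U) →
      Tendsto (fun n => ∫ x in U, A n x i j * g x) atTop
        (𝓝 (∫ x in U, Alim x i j * g x))) :
    MemM d α β U Alim :=
  stmt14_general d α β hα hαβ U A hA Alim hAlm hAlb hconv
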